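/- arXiv:1708.06716 — 6 statements merged into one kernel-verified Lean document; each statement's English description precedes it below -/
import Mathlib

section
/- Let Y be a linear threshold unit with n binary inputs and threshold k (1 ≤ k ≤ n), and let v ∈ {0,1}^n be an actual input state with Σ_i v_i ≥ k (so the actual outcome is Y = 1). Then the actual-cause candidate set x*(1) of the occurrence {Y = 1} is exactly the set of restrictions v|S with |S| = k and v_i = 1 for every i ∈ S. In particular, the actual cause of {Y = 1} is an occurrence consisting of exactly k inputs, all in state 1. -/
open Finset

/-- Number of inputs in state `1` (true). -/
def ones {n : ℕ} (u : Fin n → Bool) : ℕ := (univ.filter fun i => u i = true).card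

/-- Linear threshold unit with threshold `k`: outputs `1` iff at least `k` inputs are `1`. -/
def LTU {n : ℕ} (k : ℕ) (u : Fin n → Bool) : Bool := decide (k ≤ ones u)

/-- Effect probability `π(y | v|S) = 2^{-(n-|S|)} · #{u : u agrees with v on S ∧ Y u = y}`. -/
noncomputable def effProb {n : ℕ} (Y : (Fin n → Bool) → Bool) (v : Fin n → Bool)
    (S : Finset (Fin n)) (y : Bool) : ℝ :=
  ((univ.filter fun u : Fin n → Bool => (∀ i ∈ S, u i = v i) ∧ Y u = y).card : ℝ) /
    2 ^ (n - S.card)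

/-- Cause ratio `ρ(v|S) = log₂(π(y | v|S) / π(y))`, where `π(y) = π(y | v|∅)`. -/
noncomputable def causeRatio {n : ℕ} (Y : (Fin n → Bool) → Bool) (v : Fin n → Bool)
    (S : Finset (Fin n)) (y : Bool) : ℝ :=
  Real.logb 2 (effProb Y v S y / effProb Y v ∅ y)

/-- The actual-cause candidate set `x*(y)`: occurrences `v|S` maximizing the cause ratio `ρ`
over all subsets `S ⊆ {1,…,n}` and such that no proper subset attains the maximum. -/
def causeCandidates {n : ℕ} (Y : (Fin n → Bool) → Bool) (v : Fin n → Bool) (y : Bool) :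
    Set (Finset (Fin n)) :=
  {S | (∀ T : Finset (Fin n), causeRatio Y v T y ≤ causeRatio Y v S y) ∧
    ∀ T ⊂ S, causeRatio Y v T y ≠ causeRatio Y v S y}

/-!
For the actual outcome `y = Y v` every effect probability is positive (`v` itself is a
witness) and at most `1`, with value `1` exactly when fixing the inputs in `S` to `v` forces the
output `y`. Since `S = univ` forces it, the maximisers of the cause ratio are the forcing sets,
and the candidates are the inclusion-minimal ones. For the LTU, `S` forces `1` iff it contains at
least `k` inputs in state `1`, and the minimal such sets are the `k`-sets of such inputs.
-/

def ForcesOutput {n : ℕ} (Y : (Fin n → Bool) → Bool) (v : Fin n → Bool) (S : Finset (Fin n))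
    (y : Bool) : Prop :=
  ∀ u : Fin n → Bool, (∀ i ∈ S, u i = v i) → Y u = y

lemma card_filter_agreeOn {n : ℕ} (v : Fin n → Bool) (S : Finset (Fin n)) :
    #{u : Fin n → Bool | ∀ i ∈ S, u i = v i} = 2 ^ (n - #S) := by
  have hpi : ({u : Fin n → Bool | ∀ i ∈ S, u i = v i} : Finset _) =
      Fintype.piFinset fun i => if i ∈ S then {v i} else univ := by
    ext u
    simp only [mem_filter, mem_univ, true_and, Fintype.mem_piFinset]
    refine forall_congr' fun i => ?_
    split_ifs <;> simp [*]
  simp only [hpi, Fintype.card_piFinset, apply_ite card, card_singleton, card_univ,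
    Fintype.card_bool, prod_ite, prod_const_one, one_mul, prod_const]
  rw [filter_notMem_eq_sdiff, ← compl_eq_univ_sdiff, card_compl, Fintype.card_fin]

section EffectProbability

variable {n : ℕ} (Y : (Fin n → Bool) → Bool) (v : Fin n → Bool) (S : Finset (Fin n))

lemma effProb_eq_card_div_card (y : Bool) :
    effProb Y v S y = (#{u | (∀ i ∈ S, u i = v i) ∧ Y u = y} : ℝ) /
      #{u : Fin n → Bool | ∀ i ∈ S, u i = v i} := by
  rw [effProb, card_filter_agreeOn]
  push_cast
  rfl

lemma effProb_le_one (y : Bool) : effProb Y v S y ≤ 1 := by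
  rw [effProb_eq_card_div_card, div_le_one (by simp [card_filter_agreeOn])]
  exact_mod_cast card_le_card (monotone_filter_right _ fun _ _ => And.left)

lemma effProb_eq_one_iff (y : Bool) : effProb Y v S y = 1 ↔ ForcesOutput Y v S y := by
  rw [effProb_eq_card_div_card, div_eq_one_iff_eq (by simp [card_filter_agreeOn]), Nat.cast_inj]
  constructor
  · intro hcard u hu
    have hsub : ({u | (∀ i ∈ S, u i = v i) ∧ Y u = y} : Finset (Fin n → Bool)) ⊆
        ({u | ∀ i ∈ S, u i = v i} : Finset (Fin n → Bool)) :=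
      monotone_filter_right _ fun _ _ => And.left
    have hu' : u ∈ ({u | ∀ i ∈ S, u i = v i} : Finset (Fin n → Bool)) := by simpa using hu
    rw [← eq_of_subset_of_card_le hsub hcard.ge] at hu'
    exact (mem_filter.1 hu').2.2
  · intro hforce
    congr 1
    exact filter_congr fun u _ => ⟨And.left, fun hu => ⟨hu, hforce u hu⟩⟩

lemma effProb_self_pos : 0 < effProb Y v S (Y v) := by
  rw [effProb]
  have hv : v ∈ ({u | (∀ i ∈ S, u i = v i) ∧ Y u = Y v} : Finset (Fin n → Bool)) := by
    simp
  exact div_pos (by exact_mod_cast card_pos.2 ⟨v, hv⟩) (by positivity)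

lemma forcesOutput_univ_self : ForcesOutput Y v univ (Y v) :=
  fun _ hu => congrArg Y (funext fun i => hu i (mem_univ i))

end EffectProbability

section CauseRatio

variable {n : ℕ} (Y : (Fin n → Bool) → Bool) (v : Fin n → Bool)

lemma causeRatio_self_le_causeRatio_self_iff (T S : Finset (Fin n)) :
    causeRatio Y v T (Y v) ≤ causeRatio Y v S (Y v) ↔
      effProb Y v T (Y v) ≤ effProb Y v S (Y v) := by
  have h₀ := effProb_self_pos Y v ∅
  rw [causeRatio, causeRatio, Real.logb_le_logb one_lt_two
      (div_pos (effProb_self_pos Y v T) h₀) (div_pos (effProb_self_pos Y v S) h₀),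
    div_le_div_iff_of_pos_right h₀]

lemma causeRatio_self_eq_causeRatio_self_iff (T S : Finset (Fin n)) :
    causeRatio Y v T (Y v) = causeRatio Y v S (Y v) ↔
      effProb Y v T (Y v) = effProb Y v S (Y v) := by
  simp only [le_antisymm_iff, causeRatio_self_le_causeRatio_self_iff]

/-- The maximum `1` of `effProb` is attained at `S = univ`. -/
lemma forall_causeRatio_le_iff_forcesOutput (S : Finset (Fin n)) :
    (∀ T, causeRatio Y v T (Y v) ≤ causeRatio Y v S (Y v)) ↔ ForcesOutput Y v S (Y v) := by
  simp only [causeRatio_self_le_causeRatio_self_iff, ← effProb_eq_one_iff]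
  refine ⟨fun hmax => le_antisymm (effProb_le_one ..) ?_, fun h T => h ▸ effProb_le_one ..⟩
  exact ((effProb_eq_one_iff ..).2 (forcesOutput_univ_self Y v)).symm.le.trans (hmax univ)

theorem causeCandidates_self :
    causeCandidates Y v (Y v) = {S | Minimal (ForcesOutput Y v · (Y v)) S} := by
  ext S
  simp only [causeCandidates, Set.mem_ofPred_eq, minimal_iff_forall_lt, forall_causeRatio_le_iff_forcesOutput]
  refine and_congr_right fun hS => forall₂_congr fun T _ => not_congr ?_
  rw [causeRatio_self_eq_causeRatio_self_iff, (effProb_eq_one_iff ..).2 hS, effProb_eq_one_iff]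

end CauseRatio

lemma card_filter_le_ones_of_agreeOn {n : ℕ} {u v : Fin n → Bool} {S : Finset (Fin n)}
    (h : ∀ i ∈ S, u i = v i) : #{i ∈ S | v i = true} ≤ ones u :=
  card_le_card fun i hi => by
    rw [mem_filter] at hi
    simp [h i hi.1, hi.2]

lemma ones_decide_mem_and {n : ℕ} (v : Fin n → Bool) (S : Finset (Fin n)) :
    ones (fun i => decide (i ∈ S) && v i) = #{i ∈ S | v i = true} := by
  rw [ones]
  congr 1
  ext i
  simp

lemma forcesOutput_LTU_true_iff {n : ℕ} (k : ℕ) (v : Fin n → Bool) (S : Finset (Fin n)) :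
    ForcesOutput (LTU k) v S true ↔ k ≤ #{i ∈ S | v i = true} := by
  refine ⟨fun h => ?_, fun h u hu => decide_eq_true (h.trans (card_filter_le_ones_of_agreeOn hu))⟩
  have hS : LTU k (fun i => decide (i ∈ S) && v i) = true := h _ fun i hi => by simp [hi]
  rwa [LTU, decide_eq_true_iff, ones_decide_mem_and] at hS

lemma minimal_le_card_filter_iff {α : Type*} (p : α → Prop) [DecidablePred p] (k : ℕ)
    (S : Finset α) :
    Minimal (fun T : Finset α => k ≤ #{i ∈ T | p i}) S ↔ #S = k ∧ ∀ i ∈ S, p i := by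
  constructor
  · intro hmin
    obtain ⟨T, hTS, hTk⟩ := exists_subset_card_eq hmin.prop
    have hT : ∀ i ∈ T, p i := fun i hi => (mem_filter.1 (hTS hi)).2
    have hTmin : k ≤ #{i ∈ T | p i} := by rw [filter_true_of_mem hT, hTk]
    obtain rfl := hmin.eq_of_le hTmin (hTS.trans (filter_subset _ _))
    exact ⟨hTk, hT⟩
  · rintro ⟨hSk, hS⟩
    refine minimal_iff.2 ⟨by rw [filter_true_of_mem hS, hSk], fun T hT hTS => ?_⟩
    exact (eq_of_subset_of_card_le hTS (hSk ▸ hT.trans (card_filter_le _ _))).symm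

theorem ltu_actual_cause_of_on_state_general (n k : ℕ)
    (v : Fin n → Bool) (hv : k ≤ ones v) :
    causeCandidates (LTU k) v true =
      {S : Finset (Fin n) | S.card = k ∧ ∀ i ∈ S, v i = true} := by
  have hY : LTU k v = true := decide_eq_true hv
  conv_lhs => rw [← hY, causeCandidates_self, hY]
  ext S
  simp only [Set.mem_ofPred_eq, forcesOutput_LTU_true_iff, minimal_le_card_filter_iff]

/-- The actual cause of `{Y = 1}` for an LTU with `Σ v_i ≥ k` is an occurrence consisting of
exactly `k` inputs, all in state `1`; the candidate set is exactly the set of such `v|S`. -/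
theorem ltu_actual_cause_of_on_state (n k : ℕ) (hk1 : 1 ≤ k) (hkn : k ≤ n)
    (v : Fin n → Bool) (hv : k ≤ ones v) :
    causeCandidates (LTU k) v true =
      {S : Finset (Fin n) | S.card = k ∧ ∀ i ∈ S, v i = true} :=
  ltu_actual_cause_of_on_state_general n k v hv
end

section
/- Let Y be a linear threshold unit with n binary inputs and threshold k (1 ≤ k ≤ n), and let v ∈ {0,1}^n be an actual input state with Σ_i v_i ≥ k. Then a nonempty occurrence x = v|S has actual effect {Y = 1} (i.e., α_e(x) > 0) if and only if v_i = 1 for every i ∈ S and |S| ≤ k; every other nonempty occurrence x = v|S (i.e., one with some fixed input in state 0, or one fixing more than k inputs all to 1) is reducible, α_e(x) ≤ 0. -/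
open Finset

/-- Irreducible effect ratio of a nonempty occurrence `v|S` on outcome `y`:
`α_e = log₂( π(y | v|S) / max_{T ⊊ S} π(y | v|T) )`. -/
noncomputable def alphaE {n : ℕ} (Y : (Fin n → Bool) → Bool) (v : Fin n → Bool)
    (S : Finset (Fin n)) (hS : S.Nonempty) (y : Bool) : ℝ :=
  Real.logb 2 (effProb Y v S y /
    S.ssubsets.sup' ⟨∅, Finset.empty_mem_ssubsets hS⟩ (fun T => effProb Y v T y))

/-!
Conditioning on an input `i ∉ T`, `π(y | v|T)` is the average of `π(y | v|T∪{i})` over the two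
values of `v_i`. For a monotone `Y` and `y = 1`, the branch `v_i = 1` dominates the branch
`v_i = 0`, because switching input `i` on maps the states counted by the latter injectively into
those counted by the former. Hence fixing an extra input in state `1` never lowers `π`, and one in
state `0` never raises it. For the LTU the gain is strict while at most `k` ones are fixed: a state
whose ones form a `k`-set containing the fixed inputs lies outside the image of the switching map.
Once `k` ones are fixed, `π = 1`, so fixing more of them gains nothing.
-/

open Function

lemma card_filter_forall_mem_eq_pow {ι β : Type*} [Fintype ι] [DecidableEq ι] [Fintype β]
    [DecidableEq β] (v : ι → β) (T : Finset ι) :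
    #{u : ι → β | ∀ i ∈ T, u i = v i} = Fintype.card β ^ (Fintype.card ι - #T) := by
  have hpi : ({u : ι → β | ∀ i ∈ T, u i = v i} : Finset (ι → β)) =
      Fintype.piFinset fun i => if i ∈ T then {v i} else univ := by
    ext u
    simp only [mem_filter, mem_univ, true_and, Fintype.mem_piFinset]
    refine ⟨fun h i => ?_, fun h i hi => ?_⟩
    · split_ifs with hi
      · exact mem_singleton.mpr (h i hi)
      · exact mem_univ _
    · simpa [hi] using h i
  rw [hpi, Fintype.card_piFinset, ← card_compl, ← prod_const, ← Fintype.prod_ite_mem Tᶜ]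
  exact Fintype.prod_congr _ _ fun i => by by_cases hi : i ∈ T <;> simp [hi]

def effSet {n : ℕ} (Y : (Fin n → Bool) → Bool) (v : Fin n → Bool) (T : Finset (Fin n))
    (y : Bool) : Finset (Fin n → Bool) :=
  {u | (∀ i ∈ T, u i = v i) ∧ Y u = y}

section EffSet

variable {n : ℕ} {Y : (Fin n → Bool) → Bool} {u v : Fin n → Bool} {T : Finset (Fin n)}
  {i : Fin n} {y : Bool}

lemma mem_effSet : u ∈ effSet Y v T y ↔ (∀ j ∈ T, u j = v j) ∧ Y u = y := by
  simp [effSet]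

lemma effProb_eq_card_div : effProb Y v T y = #(effSet Y v T y) / 2 ^ (n - #T) := rfl

lemma effProb_pos (hv : Y v = y) : 0 < effProb Y v T y := by
  rw [effProb_eq_card_div]
  have : 0 < #(effSet Y v T y) := card_pos.mpr ⟨v, mem_effSet.mpr ⟨fun _ _ => rfl, hv⟩⟩
  positivity

lemma effProb_eq_one (h : ∀ u, (∀ j ∈ T, u j = v j) → Y u = y) : effProb Y v T y = 1 := by
  have hset : effSet Y v T y = ({u | ∀ j ∈ T, u j = v j} : Finset (Fin n → Bool)) :=
    filter_congr fun u _ => and_iff_left_of_imp (h u)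
  have hcyl : #({u | ∀ j ∈ T, u j = v j} : Finset (Fin n → Bool)) = 2 ^ (n - #T) := by
    convert card_filter_forall_mem_eq_pow v T <;> simp
  rw [effProb_eq_card_div, hset, hcyl]
  simp

lemma forall_mem_insert_update_iff (hi : i ∉ T) (b : Bool) :
    (∀ j ∈ insert i T, u j = update v i b j) ↔ u i = b ∧ ∀ j ∈ T, u j = v j := by
  refine (forall_mem_insert _ _ _).trans (and_congr (by simp) (forall₂_congr fun j hj => ?_))
  rw [update_of_ne (ne_of_mem_of_not_mem hj hi)]

lemma card_effSet_eq_add (hi : i ∉ T) :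
    #(effSet Y v T y) = #(effSet Y (update v i true) (insert i T) y) +
      #(effSet Y (update v i false) (insert i T) y) := by
  rw [← card_filter_add_card_filter_not (s := effSet Y v T y) (fun u => u i = true)]
  congr 2 <;> ext u <;> simp only [mem_filter, mem_effSet, forall_mem_insert_update_iff hi] <;>
    cases u i <;> tauto

lemma effProb_eq_average (hi : i ∉ T) :
    effProb Y v T y = (effProb Y (update v i true) (insert i T) y +
      effProb Y (update v i false) (insert i T) y) / 2 := by
  have hcard : #T + 1 ≤ n := by
    simpa [card_insert_of_notMem hi] using card_le_univ (insert i T)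
  have hpow : (2 : ℝ) ^ (n - #T) = 2 ^ (n - #(insert i T)) * 2 := by
    rw [card_insert_of_notMem hi, ← pow_succ]
    congr 1
    omega
  simp only [effProb_eq_card_div, card_effSet_eq_add hi (y := y), hpow]
  push_cast
  ring

lemma alphaE_pos_iff {S : Finset (Fin n)} (hS : S.Nonempty) (hv : Y v = y) :
    0 < alphaE Y v S hS y ↔ ∀ T ⊂ S, effProb Y v T y < effProb Y v S y := by
  have hmax : 0 < S.ssubsets.sup' ⟨∅, empty_mem_ssubsets hS⟩ (fun T => effProb Y v T y) :=
    (effProb_pos hv).trans_le (le_sup' (fun T => effProb Y v T y) (empty_mem_ssubsets hS))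
  rw [alphaE, Real.logb_pos_iff one_lt_two (div_pos (effProb_pos hv) hmax), one_lt_div hmax]
  exact (sup'_lt_iff _).trans (by simp only [mem_ssubsets])

end EffSet

section Monotone

variable {n : ℕ} {Y : (Fin n → Bool) → Bool} {u v w : Fin n → Bool} {T U : Finset (Fin n)}
  {i : Fin n}

lemma apply_eq_of_mem_effSet {b y : Bool} (hu : u ∈ effSet Y (update v i b) T y)
    (hi : i ∈ T) : u i = b := by
  simpa using (mem_effSet.mp hu).1 i hi

lemma update_true_mem_effSet (hY : Monotone Y)
    (hu : u ∈ effSet Y (update v i false) T true) :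
    update u i true ∈ effSet Y (update v i true) T true := by
  rw [mem_effSet] at hu ⊢
  refine ⟨fun j hj => ?_, ?_⟩
  · by_cases hji : j = i
    · simp [hji]
    · simp [update_of_ne hji, hu.1 j hj]
  · have hle : u ≤ update u i true :=
      le_update_iff.mpr ⟨Bool.le_true _, fun _ _ => le_rfl⟩
    exact Bool.le_iff_imp.mp (hY hle) hu.2

lemma injOn_update_true (hi : i ∈ T) :
    Set.InjOn (update · i true) (effSet Y (update v i false) T true : Set (Fin n → Bool)) := by
  intro a ha b hb hab
  rw [← update_eq_self i a, ← update_eq_self i b,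
    apply_eq_of_mem_effSet ha hi, apply_eq_of_mem_effSet hb hi]
  simpa using congrArg (update · i false) hab

lemma effProb_update_false_le (hY : Monotone Y) (hi : i ∈ T) :
    effProb Y (update v i false) T true ≤ effProb Y (update v i true) T true := by
  rw [effProb_eq_card_div, effProb_eq_card_div]
  refine div_le_div_of_nonneg_right ?_ (by positivity)
  exact_mod_cast card_le_card_of_injOn _ (fun _ hu => update_true_mem_effSet hY hu)
    (injOn_update_true hi)

lemma effProb_update_false_lt (hY : Monotone Y) (hi : i ∈ T)
    (hw : w ∈ effSet Y (update v i true) T true)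
    (hpiv : Y (update w i false) = false) :
    effProb Y (update v i false) T true < effProb Y (update v i true) T true := by
  rw [effProb_eq_card_div, effProb_eq_card_div]
  refine div_lt_div_of_pos_right ?_ (by positivity)
  norm_cast
  have hmaps : ∀ u ∈ effSet Y (update v i false) T true,
      update u i true ∈ (effSet Y (update v i true) T true).erase w := by
    intro u hu
    refine mem_erase.mpr ⟨fun hw' => ?_, update_true_mem_effSet hY hu⟩
    have hu' : update w i false = u := by
      rw [← hw', update_idem, ← apply_eq_of_mem_effSet hu hi, update_eq_self]
    simp [hu', (mem_effSet.mp hu).2] at hpiv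
  have hle := card_le_card_of_injOn _ hmaps (injOn_update_true hi)
  rw [card_erase_of_mem hw] at hle
  have := card_pos.mpr ⟨w, hw⟩
  omega

lemma effProb_le_effProb_insert (hY : Monotone Y) (hv : v i = true) :
    effProb Y v T true ≤ effProb Y v (insert i T) true := by
  by_cases hi : i ∈ T
  · rw [insert_eq_of_mem hi]
  have hupd : update v i true = v := hv ▸ update_eq_self i v
  have := effProb_update_false_le (v := v) hY (mem_insert_self i T)
  rw [effProb_eq_average hi, hupd] at *
  linarith

lemma effProb_lt_effProb_insert (hY : Monotone Y) (hi : i ∉ T) (hv : v i = true)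
    (hw : w ∈ effSet Y v (insert i T) true) (hpiv : Y (update w i false) = false) :
    effProb Y v T true < effProb Y v (insert i T) true := by
  have hupd : update v i true = v := hv ▸ update_eq_self i v
  have := effProb_update_false_lt (v := v) hY (mem_insert_self i T) (by rwa [hupd]) hpiv
  rw [effProb_eq_average hi, hupd] at *
  linarith

lemma effProb_insert_le_effProb (hY : Monotone Y) (hv : v i = false) :
    effProb Y v (insert i T) true ≤ effProb Y v T true := by
  by_cases hi : i ∈ T
  · rw [insert_eq_of_mem hi]
  have hupd : update v i false = v := hv ▸ update_eq_self i v
  have := effProb_update_false_le (v := v) hY (mem_insert_self i T)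
  rw [effProb_eq_average hi, hupd] at *
  linarith

lemma effProb_le_effProb_of_subset (hY : Monotone Y) (hTU : T ⊆ U)
    (hv : ∀ i ∈ U, v i = true) :
    effProb Y v T true ≤ effProb Y v U true := by
  have key : ∀ D : Finset (Fin n), (∀ i ∈ D, v i = true) →
      effProb Y v T true ≤ effProb Y v (D ∪ T) true := by
    intro D
    induction D using Finset.induction_on with
    | empty => simp
    | insert a D _ ih =>
      intro hD
      rw [insert_union]
      exact (ih fun i hi => hD i (mem_insert_of_mem hi)).trans
        (effProb_le_effProb_insert hY (hD a (mem_insert_self a D)))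
  simpa [sdiff_union_of_subset hTU] using key (U \ T) fun i hi => hv i (mem_sdiff.mp hi).1

end Monotone

section LTU

variable {n k : ℕ} {u v : Fin n → Bool} {S T : Finset (Fin n)}

lemma ltu_monotone (k : ℕ) : Monotone (LTU k : (Fin n → Bool) → Bool) := by
  intro u w huw
  have hones : ones u ≤ ones w :=
    card_le_card (monotone_filter_right _ fun i _ => Bool.le_iff_imp.mp (huw i))
  exact Bool.le_iff_imp.mpr fun h => decide_eq_true ((of_decide_eq_true h).trans hones)

lemma card_le_ones (h : ∀ j ∈ T, u j = true) : #T ≤ ones u :=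
  card_le_card fun j hj => mem_filter.mpr ⟨mem_univ j, h j hj⟩

lemma ones_decide_mem (W : Finset (Fin n)) : ones (fun j => decide (j ∈ W)) = #W := by
  simp [ones]

lemma ltu_effProb_eq_one (hT : ∀ j ∈ T, v j = true) (hk : k ≤ #T) :
    effProb (LTU k) v T true = 1 :=
  effProb_eq_one fun _ hu =>
    decide_eq_true (hk.trans (card_le_ones fun j hj => (hu j hj).trans (hT j hj)))

lemma ltu_exists_pivotal (hT : ∀ j ∈ T, v j = true) (hTk : #T ≤ k) (hkn : k ≤ n) {i : Fin n}
    (hi : i ∈ T) : ∃ w ∈ effSet (LTU k) v T true, LTU k (update w i false) = false := by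
  obtain ⟨W, hTW, hW⟩ := exists_superset_card_eq hTk (by simpa using hkn)
  have hupd : update (fun j => decide (j ∈ W)) i false = fun j => decide (j ∈ W.erase i) := by
    ext j
    by_cases hji : j = i <;> simp [hji]
  refine ⟨fun j => decide (j ∈ W),
    mem_effSet.mpr ⟨fun j hj => by simp [hTW hj, hT j hj], ?_⟩, ?_⟩
  · simp [LTU, ones_decide_mem, hW]
  · have := card_pos.mpr ⟨i, hTW hi⟩
    simp only [hupd, LTU, ones_decide_mem, card_erase_of_mem (hTW hi), hW, decide_eq_false_iff_not]
    omega

lemma ltu_effProb_lt_of_ssubset (hkn : k ≤ n) (hS : ∀ j ∈ S, v j = true) (hSk : #S ≤ k)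
    (hTS : T ⊂ S) : effProb (LTU k) v T true < effProb (LTU k) v S true := by
  obtain ⟨i, hiS, hiT⟩ := exists_of_ssubset hTS
  have hiTS : insert i T ⊆ S := insert_subset hiS hTS.subset
  obtain ⟨w, hw, hpiv⟩ := ltu_exists_pivotal (fun j hj => hS j (hiTS hj))
    ((card_le_card hiTS).trans hSk) hkn (mem_insert_self i T)
  calc effProb (LTU k) v T true
      < effProb (LTU k) v (insert i T) true :=
        effProb_lt_effProb_insert (ltu_monotone k) hiT (hS i hiS) hw hpiv
    _ ≤ effProb (LTU k) v S true := effProb_le_effProb_of_subset (ltu_monotone k) hiTS hS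

lemma ltu_exists_ssubset_effProb_le (hS : ¬((∀ j ∈ S, v j = true) ∧ #S ≤ k)) :
    ∃ T ⊂ S, effProb (LTU k) v S true ≤ effProb (LTU k) v T true := by
  by_cases hall : ∀ j ∈ S, v j = true
  · have hkS : k < #S := not_le.mp (hS ∘ And.intro hall)
    obtain ⟨T, hTS, hT⟩ := exists_subset_card_eq hkS.le
    refine ⟨T, ssubset_of_subset_of_ne hTS (by rintro rfl; omega), ?_⟩
    rw [ltu_effProb_eq_one hall hkS.le, ltu_effProb_eq_one (fun j hj => hall j (hTS hj)) hT.ge]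
  · push Not at hall
    obtain ⟨i, hiS, hvi⟩ := hall
    refine ⟨S.erase i, erase_ssubset hiS, ?_⟩
    simpa [insert_erase hiS] using
      effProb_insert_le_effProb (T := S.erase i) (ltu_monotone k) (eq_false_of_ne_true hvi)

end LTU

theorem ltu_actual_effects_of_on_state_general (n k : ℕ) (hkn : k ≤ n)
    (v : Fin n → Bool) (hv : k ≤ ones v) (S : Finset (Fin n)) (hS : S.Nonempty) :
    (0 < alphaE (LTU k) v S hS true ↔ (∀ i ∈ S, v i = true) ∧ S.card ≤ k) ∧
    (¬ ((∀ i ∈ S, v i = true) ∧ S.card ≤ k) → alphaE (LTU k) v S hS true ≤ 0) := by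
  have hpos : 0 < alphaE (LTU k) v S hS true ↔ (∀ i ∈ S, v i = true) ∧ #S ≤ k := by
    rw [alphaE_pos_iff hS (decide_eq_true hv)]
    refine ⟨fun h => by_contra fun hS' => ?_, fun ⟨hall, hSk⟩ T hTS =>
      ltu_effProb_lt_of_ssubset hkn hall hSk hTS⟩
    obtain ⟨T, hTS, hle⟩ := ltu_exists_ssubset_effProb_le hS'
    exact (h T hTS).not_ge hle
  exact ⟨hpos, fun h => not_lt.mp (mt hpos.mp h)⟩

/-- For an LTU with `Σ v_i ≥ k`, a nonempty occurrence `v|S` has actual effect `{Y = 1}`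
(`α_e > 0`) iff all inputs fixed by `S` are in state `1` and `|S| ≤ k`; every other nonempty
occurrence is reducible (`α_e ≤ 0`). -/
theorem ltu_actual_effects_of_on_state (n k : ℕ) (hk1 : 1 ≤ k) (hkn : k ≤ n)
    (v : Fin n → Bool) (hv : k ≤ ones v) (S : Finset (Fin n)) (hS : S.Nonempty) :
    (0 < alphaE (LTU k) v S hS true ↔ (∀ i ∈ S, v i = true) ∧ S.card ≤ k) ∧
    (¬ ((∀ i ∈ S, v i = true) ∧ S.card ≤ k) → alphaE (LTU k) v S hS true ≤ 0) :=
  ltu_actual_effects_of_on_state_general n k hkn v hv S hS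
end

section
/- Let Y be a linear threshold unit with n binary inputs and threshold k (1 ≤ k ≤ n), and let v ∈ {0,1}^n with Σ_i v_i ≥ k. Then the actual-cause candidate set x*(1) of the occurrence {Y = 1} has cardinality binomial(Σ_i v_i, k). In particular, the actual cause of {Y = 1} is unique if and only if Σ_i v_i = k, and it is indeterminate (a case of symmetric overdetermination) whenever Σ_i v_i > k. -/
open Finset

variable {n k : ℕ} (v : Fin n → Bool) (S : Finset (Fin n))

def agrees {n : ℕ} (v : Fin n → Bool) (S : Finset (Fin n)) : Finset (Fin n → Bool) :=
  univ.filter fun u => ∀ i ∈ S, u i = v i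

lemma card_agrees : (agrees v S).card = 2 ^ (n - S.card) := by
  have h1 : (agrees v S).card = Fintype.card {u : Fin n → Bool // ∀ i ∈ S, u i = v i} := by
    rw [Fintype.card_subtype]; rfl
  have e : {u : Fin n → Bool // ∀ i ∈ S, u i = v i} ≃ ({i : Fin n // i ∉ S} → Bool) :=
    { toFun := fun u i => u.1 i
      invFun := fun g => ⟨fun i => if h : i ∈ S then v i else g ⟨i, h⟩,
        fun i hi => dif_pos hi⟩
      left_inv := fun u => by
        ext i; by_cases h : i ∈ S <;> simp [h, u.2 i]
      right_inv := fun g => by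
        ext i; simp [i.2] }
  have h2 : Fintype.card {i : Fin n // i ∉ S} = n - S.card := by
    simp [Fintype.card_subtype, Finset.filter_not, Finset.filter_mem_eq_inter,
      Finset.card_sdiff_of_subset (Finset.subset_univ S)]
  rw [h1, Fintype.card_congr e, Fintype.card_fun, h2, Fintype.card_bool]

/-- The numerator finset. -/
def good {n : ℕ} (k : ℕ) (v : Fin n → Bool) (S : Finset (Fin n)) : Finset (Fin n → Bool) :=
  univ.filter fun u : Fin n → Bool => (∀ i ∈ S, u i = v i) ∧ LTU k u = true

lemma good_eq : good k v S = (agrees v S).filter (fun u => LTU k u = true) := by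
  simp [good, agrees, Finset.filter_filter]

lemma effProb_eq : effProb (LTU k) v S true = ((good k v S).card : ℝ) / 2 ^ (n - S.card) := rfl

lemma good_subset : good k v S ⊆ agrees v S := by
  rw [good_eq]; exact Finset.filter_subset _ _

lemma effProb_le_one_s3 : effProb (LTU k) v S true ≤ 1 := by
  rw [effProb_eq, div_le_one (by positivity)]
  calc ((good k v S).card : ℝ) ≤ ((agrees v S).card : ℝ) := by
        exact_mod_cast Finset.card_le_card (good_subset v S)
    _ = 2 ^ (n - S.card) := by rw [card_agrees]; push_cast; ring

lemma effProb_pos_s3 (hv : k ≤ ones v) : 0 < effProb (LTU k) v S true := by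
  rw [effProb_eq]
  apply div_pos _ (by positivity)
  have : (fun i => if i ∈ S then v i else true) ∈ good k v S := by
    rw [good_eq, Finset.mem_filter]
    refine ⟨by simp only [agrees, Finset.mem_filter, Finset.mem_univ, true_and]; intro i hi; simp [hi], ?_⟩
    simp only [LTU, decide_eq_true_eq]
    refine le_trans hv (Finset.card_le_card ?_)
    intro i hi
    simp only [Finset.mem_filter, Finset.mem_univ, true_and] at hi ⊢
    by_cases h : i ∈ S <;> simp [h, hi]
  have hpos : 0 < (good k v S).card := Finset.card_pos.mpr ⟨_, this⟩
  exact_mod_cast hpos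

lemma effProb_eq_one_iff_s3 :
    effProb (LTU k) v S true = 1 ↔ k ≤ (S.filter fun i => v i = true).card := by
  rw [effProb_eq]
  have hpow : (0:ℝ) < 2 ^ (n - S.card) := by positivity
  rw [div_eq_one_iff_eq (ne_of_gt hpow)]
  have hcast : ((good k v S).card : ℝ) = (2:ℝ) ^ (n - S.card) ↔
      (good k v S).card = 2 ^ (n - S.card) := by exact_mod_cast Iff.rfl
  rw [hcast, ← card_agrees v S]
  constructor
  · intro h
    have heq : good k v S = agrees v S :=
      Finset.eq_of_subset_of_card_le (good_subset v S) (le_of_eq h.symm)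
    -- apply to u₀
    have hu0 : (fun i => if i ∈ S then v i else false) ∈ agrees v S := by
      simp only [agrees, Finset.mem_filter, Finset.mem_univ, true_and]
      intro i hi; simp [hi]
    rw [← heq, good_eq, Finset.mem_filter] at hu0
    have := hu0.2
    simp only [LTU, decide_eq_true_eq] at this
    refine le_trans this (le_of_eq ?_)
    unfold ones
    congr 1
    ext i
    by_cases h : i ∈ S <;> simp [Finset.mem_filter, h]
  · intro h
    congr 1
    rw [good_eq]
    apply Finset.filter_true_of_mem
    intro u hu
    simp only [agrees, Finset.mem_filter, Finset.mem_univ, true_and] at hu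
    simp only [LTU, decide_eq_true_eq]
    refine le_trans h (Finset.card_le_card ?_)
    intro i hi
    simp only [Finset.mem_filter, Finset.mem_univ, true_and] at hi ⊢
    rw [hu i hi.1]; exact hi.2

lemma ratio_le_iff (hv : k ≤ ones v) (T : Finset (Fin n)) :
    causeRatio (LTU k) v T true ≤ causeRatio (LTU k) v S true ↔
      effProb (LTU k) v T true ≤ effProb (LTU k) v S true := by
  have hc : 0 < effProb (LTU k) v (∅ : Finset (Fin n)) true := effProb_pos_s3 v ∅ hv
  unfold causeRatio
  rw [Real.logb_le_logb one_lt_two (div_pos (effProb_pos_s3 v T hv) hc)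
    (div_pos (effProb_pos_s3 v S hv) hc), div_le_div_iff_of_pos_right hc]

lemma ratio_eq_iff (hv : k ≤ ones v) (T : Finset (Fin n)) :
    causeRatio (LTU k) v T true = causeRatio (LTU k) v S true ↔
      effProb (LTU k) v T true = effProb (LTU k) v S true := by
  constructor <;> intro h
  · exact le_antisymm ((ratio_le_iff v S hv T).mp h.le)
      (by rw [← (ratio_le_iff v T hv S)]; exact h.ge)
  · exact le_antisymm ((ratio_le_iff v S hv T).mpr h.le)
      ((ratio_le_iff v T hv S).mpr h.ge)

lemma eff_Ov (hv : k ≤ ones v) :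
    effProb (LTU k) v (univ.filter fun i => v i = true) true = 1 := by
  rw [effProb_eq_one_iff_s3]
  refine le_trans hv (le_of_eq ?_)
  unfold ones; congr 1; ext i; simp

lemma max_iff (hv : k ≤ ones v) :
    (∀ T : Finset (Fin n), causeRatio (LTU k) v T true ≤ causeRatio (LTU k) v S true) ↔
      effProb (LTU k) v S true = 1 := by
  constructor
  · intro h
    have h1 := (ratio_le_iff v S hv _).mp (h (univ.filter fun i => v i = true))
    rw [eff_Ov v hv] at h1
    exact le_antisymm (effProb_le_one_s3 v S) h1
  · intro h T
    rw [ratio_le_iff v S hv T, h]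
    exact effProb_le_one_s3 v T

lemma cand_iff (hv : k ≤ ones v) :
    S ∈ causeCandidates (LTU k) v true ↔
      S ⊆ (univ.filter fun i => v i = true) ∧ S.card = k := by
  have key : S ∈ causeCandidates (LTU k) v true ↔
      (k ≤ (S.filter fun i => v i = true).card ∧
        ∀ T ⊂ S, ¬ k ≤ (T.filter fun i => v i = true).card) := by
    unfold causeCandidates
    simp only [Set.mem_setOf_eq, max_iff v S hv, effProb_eq_one_iff_s3]
    constructor
    · rintro ⟨h1, h2⟩
      refine ⟨h1, fun T hT hkT => h2 T hT ?_⟩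
      rw [ratio_eq_iff v S hv T, (effProb_eq_one_iff_s3 v S).mpr h1,
        (effProb_eq_one_iff_s3 v T).mpr hkT]
    · rintro ⟨h1, h2⟩
      refine ⟨h1, fun T hT heq => h2 T hT ?_⟩
      rw [ratio_eq_iff v S hv T, (effProb_eq_one_iff_s3 v S).mpr h1] at heq
      rw [← effProb_eq_one_iff_s3 v T, heq]
  rw [key]
  constructor
  · rintro ⟨h1, h2⟩
    have hfS : S.filter (fun i => v i = true) = S := by
      by_contra hne
      have hss : S.filter (fun i => v i = true) ⊂ S :=
        lt_of_le_of_ne (Finset.filter_subset _ _) hne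
      refine h2 _ hss ?_
      rw [Finset.filter_filter]
      simpa using h1
    have hsub : S ⊆ (univ.filter fun i => v i = true) := by
      intro i hi
      rw [← hfS] at hi
      simp only [Finset.mem_filter] at hi ⊢
      exact ⟨Finset.mem_univ i, hi.2⟩
    rw [hfS] at h1
    refine ⟨hsub, le_antisymm ?_ h1⟩
    by_contra hlt
    push_neg at hlt
    obtain ⟨T, hTS, hTcard⟩ := Finset.exists_subset_card_eq h1
    have hTs : T ⊂ S := hTS.ssubset_of_ne (fun h => by rw [h] at hTcard; omega)
    refine h2 T hTs ?_
    have hfT : T.filter (fun i => v i = true) = T :=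
      Finset.filter_true_of_mem fun i hi => by
        have := hsub (hTS hi); simpa using this
    rw [hfT, hTcard]
  · rintro ⟨hsub, hcard⟩
    have hfS : S.filter (fun i => v i = true) = S :=
      Finset.filter_true_of_mem fun i hi => by
        have := hsub hi; simpa using this
    refine ⟨by rw [hfS, hcard], fun T hT => ?_⟩
    have hfT : T.filter (fun i => v i = true) = T :=
      Finset.filter_true_of_mem fun i hi => by
        have := hsub (hT.subset hi); simpa using this
    rw [hfT]
    have := Finset.card_lt_card hT
    omega

lemma one_lt_choose {m k : ℕ} (hk : 1 ≤ k) (h : k < m) : 1 < m.choose k := by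
  have h1 : (k+1).choose k ≤ m.choose k := Nat.choose_le_choose k h
  rw [Nat.choose_succ_self_right] at h1
  omega

/-- For an LTU with `Σ v_i ≥ k`, the candidate set `x*(1)` has cardinality `C(Σ v_i, k)`.
In particular the actual cause is unique iff `Σ v_i = k`, and it is indeterminate
(symmetric overdetermination) whenever `Σ v_i > k`. -/
theorem ltu_cause_candidate_count (n k : ℕ) (hk1 : 1 ≤ k) (hkn : k ≤ n)
    (v : Fin n → Bool) (hv : k ≤ ones v) :
    (causeCandidates (LTU k) v true).ncard = (ones v).choose k ∧
    ((causeCandidates (LTU k) v true).ncard = 1 ↔ ones v = k) ∧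
    (k < ones v → 1 < (causeCandidates (LTU k) v true).ncard) := by
  have hset : causeCandidates (LTU k) v true =
      ↑((univ.filter fun i => v i = true).powersetCard k) := by
    ext S
    rw [Finset.mem_coe, Finset.mem_powersetCard]
    exact cand_iff v S hv
  have hcard : (causeCandidates (LTU k) v true).ncard = (ones v).choose k := by
    rw [hset, Set.ncard_coe_finset, Finset.card_powersetCard]
    rfl
  refine ⟨hcard, ?_, ?_⟩
  · rw [hcard]
    constructor
    · intro h
      by_contra hne
      have hlt : k < ones v := lt_of_le_of_ne hv (fun e => hne e.symm)
      have := one_lt_choose hk1 hlt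
      omega
    · intro h; rw [h, Nat.choose_self]
  · intro hlt
    rw [hcard]
    exact one_lt_choose hk1 hlt
end

section
/- For all natural numbers j, m, k, n with j < m ≤ k ≤ n, the strict inequality 2^{m−j} · Σ_{i = k−m}^{n−m} binomial(n−m, i) > Σ_{i = k−j}^{n−j} binomial(n−j, i) holds. Equivalently, for a linear threshold unit with n inputs and threshold k, fixing m ≤ k inputs to state 1 yields a strictly larger probability of output 1 than fixing only j < m inputs to state 1 (all other inputs being uniformly and independently marginalized). -/
open Finset

lemma ltu_key (a N : ℕ) (h : a ≤ N) :
    ∑ i ∈ Finset.Icc (a + 1) (N + 1), (N + 1).choose i <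
      2 * ∑ i ∈ Finset.Icc a N, N.choose i := by
  have hmap : ∀ f : ℕ → ℕ,
      ∑ i ∈ Finset.Icc (a + 1) (N + 1), f i = ∑ i ∈ Finset.Icc a N, f (i + 1) := by
    intro f
    rw [← Finset.map_add_right_Icc a N 1, Finset.sum_map]
    rfl
  rw [hmap]
  have hsplit : ∑ i ∈ Finset.Icc a N, (N + 1).choose (i + 1)
      = (∑ i ∈ Finset.Icc a N, N.choose i) + ∑ i ∈ Finset.Icc a N, N.choose (i + 1) := by
    rw [← Finset.sum_add_distrib]
    apply Finset.sum_congr rfl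
    intro i _
    rw [Nat.choose_succ_succ']
  rw [hsplit]
  -- B' = sum over Icc (a+1) N
  have hB : ∑ i ∈ Finset.Icc a N, N.choose (i + 1)
      = ∑ i ∈ Finset.Icc (a + 1) (N + 1), N.choose i := (hmap _).symm
  have hins1 : Finset.Icc (a + 1) (N + 1) = insert (N + 1) (Finset.Icc (a + 1) N) := by
    ext i; simp only [Finset.mem_Icc, Finset.mem_insert]; omega
  have hins2 : Finset.Icc a N = insert a (Finset.Icc (a + 1) N) := by
    ext i; simp only [Finset.mem_Icc, Finset.mem_insert]; omega
  have hB2 : ∑ i ∈ Finset.Icc a N, N.choose (i + 1) = ∑ i ∈ Finset.Icc (a + 1) N, N.choose i := by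
    rw [hB, hins1, Finset.sum_insert (by simp), Nat.choose_succ_self, Nat.zero_add]
  have hA : ∑ i ∈ Finset.Icc a N, N.choose i
      = N.choose a + ∑ i ∈ Finset.Icc (a + 1) N, N.choose i := by
    rw [hins2, Finset.sum_insert (by simp)]
  have hpos : 0 < N.choose a := Nat.choose_pos h
  omega

lemma ltu_step (k n t : ℕ) (htk : t < k) (hkn : k ≤ n) :
    ∑ i ∈ Finset.Icc (k - t) (n - t), (n - t).choose i <
      2 * ∑ i ∈ Finset.Icc (k - (t + 1)) (n - (t + 1)), (n - (t + 1)).choose i := by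
  have h := ltu_key (k - (t + 1)) (n - (t + 1)) (by omega)
  have e1 : k - (t + 1) + 1 = k - t := by omega
  have e2 : n - (t + 1) + 1 = n - t := by omega
  rw [e1, e2] at h
  exact h

/-- For `j < m ≤ k ≤ n`: `2^{m−j} · Σ_{i=k−m}^{n−m} C(n−m, i) > Σ_{i=k−j}^{n−j} C(n−j, i)`.
Equivalently, for a linear threshold unit with `n` inputs and threshold `k`, fixing `m ≤ k`
inputs to state `1` yields a strictly larger probability of output `1` than fixing only
`j < m` inputs to state `1` (all other inputs uniformly and independently marginalized). -/
theorem ltu_fixing_more_ones_strictly_raises_prob (j m k n : ℕ)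
    (hjm : j < m) (hmk : m ≤ k) (hkn : k ≤ n) :
    (∑ i ∈ Finset.Icc (k - j) (n - j), (n - j).choose i) <
      2 ^ (m - j) * ∑ i ∈ Finset.Icc (k - m) (n - m), (n - m).choose i := by
  induction m, hjm using Nat.le_induction with
  | base =>
    have h := ltu_step k n j (by omega) hkn
    have e : j + 1 - j = 1 := by omega
    rw [e, pow_one]
    exact h
  | succ m hm ih =>
    have hmk' : m ≤ k := by omega
    have hstep := ltu_step k n m (by omega) hkn
    calc (∑ i ∈ Finset.Icc (k - j) (n - j), (n - j).choose i)
        < 2 ^ (m - j) * ∑ i ∈ Finset.Icc (k - m) (n - m), (n - m).choose i :=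
          ih hmk'
      _ ≤ 2 ^ (m - j) *
            (2 * ∑ i ∈ Finset.Icc (k - (m + 1)) (n - (m + 1)), (n - (m + 1)).choose i) :=
          Nat.mul_le_mul_left _ (le_of_lt hstep)
      _ = 2 ^ (m + 1 - j) *
            ∑ i ∈ Finset.Icc (k - (m + 1)) (n - (m + 1)), (n - (m + 1)).choose i := by
          have : m + 1 - j = (m - j) + 1 := by omega
          rw [this, pow_succ]
          ring
end

section
/- Let Y be a disjunction-of-conjunctions gate over disjoint blocks B_1,…,B_K, and let v ∈ {0,1}^n be an actual input state such that at least one block is all-ones in v (so the actual outcome is Y = 1). Then the actual-cause candidate set x*(1) of the occurrence {Y = 1} is exactly { v|B_j : v_i = 1 for all i ∈ B_j }; i.e., the actual cause of {Y = 1} is a complete satisfied conjunction, all of whose inputs are in state 1, and it is indeterminate among the satisfied conjunctions when more than one is satisfied. -/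
open Finset

/-- Disjunction-of-conjunctions gate over blocks `B 1, …, B K`: outputs `1` iff some block has
all of its inputs in state `1`. -/
def DOC {n K : ℕ} (B : Fin K → Finset (Fin n)) (u : Fin n → Bool) : Bool :=
  decide (∃ j, ∀ i ∈ B j, u i = true)

/- ===== Auxiliary lemmas ===== -/

lemma card_agree {n : ℕ} (v : Fin n → Bool) (S : Finset (Fin n)) :
    (univ.filter fun u : Fin n → Bool => ∀ i ∈ S, u i = v i).card = 2 ^ (n - S.card) := by
  classical
  have e : {u : Fin n → Bool // ∀ i ∈ S, u i = v i} ≃ ({i : Fin n // i ∉ S} → Bool) :=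
    { toFun := fun u i => u.1 i.1
      invFun := fun f => ⟨fun i => if h : i ∈ S then v i else f ⟨i, h⟩,
        fun i hi => dif_pos hi⟩
      left_inv := fun u => by
        apply Subtype.ext
        funext i
        by_cases h : i ∈ S
        · simp [h, u.2 i h]
        · simp [h]
      right_inv := fun f => by
        funext i
        simp [i.2] }
  calc (univ.filter fun u : Fin n → Bool => ∀ i ∈ S, u i = v i).card
      = Fintype.card {u : Fin n → Bool // ∀ i ∈ S, u i = v i} := (Fintype.card_subtype _).symm
    _ = Fintype.card ({i : Fin n // i ∉ S} → Bool) := Fintype.card_congr e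
    _ = 2 ^ (n - S.card) := by
        rw [Fintype.card_fun, Fintype.card_bool]
        congr 1
        rw [Fintype.card_subtype]
        have h : (univ.filter fun i : Fin n => i ∉ S) = Sᶜ := by ext i; simp
        rw [h, card_compl, Fintype.card_fin]

lemma effProb_le_one_s7 {n K : ℕ} (B : Fin K → Finset (Fin n)) (v : Fin n → Bool)
    (S : Finset (Fin n)) : effProb (DOC B) v S true ≤ 1 := by
  classical
  unfold effProb
  rw [div_le_one (by positivity)]
  have hle : (univ.filter fun u : Fin n → Bool => (∀ i ∈ S, u i = v i) ∧ DOC B u = true).card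
      ≤ (univ.filter fun u : Fin n → Bool => ∀ i ∈ S, u i = v i).card := by
    apply Finset.card_le_card
    intro u hu
    simp only [mem_filter, mem_univ, true_and] at hu ⊢
    exact hu.1
  rw [card_agree v S] at hle
  exact_mod_cast hle

lemma effProb_pos_s7 {n K : ℕ} (B : Fin K → Finset (Fin n)) (v : Fin n → Bool)
    (hv : ∃ j, ∀ i ∈ B j, v i = true) (S : Finset (Fin n)) :
    0 < effProb (DOC B) v S true := by
  classical
  unfold effProb
  apply div_pos _ (by positivity)
  have hmem : (fun i => if i ∈ S then v i else true)
      ∈ univ.filter fun u : Fin n → Bool => (∀ i ∈ S, u i = v i) ∧ DOC B u = true := by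
    simp only [mem_filter, mem_univ, true_and]
    refine ⟨fun i hi => if_pos hi, ?_⟩
    obtain ⟨j, hj⟩ := hv
    simp only [DOC, decide_eq_true_eq]
    exact ⟨j, fun i hi => by by_cases h : i ∈ S <;> simp [h, hj i hi]⟩
  have hpos := Finset.card_pos.mpr ⟨_, hmem⟩
  exact_mod_cast hpos

lemma effProb_eq_one_iff_s7 {n K : ℕ} (B : Fin K → Finset (Fin n)) (v : Fin n → Bool)
    (S : Finset (Fin n)) :
    effProb (DOC B) v S true = 1 ↔ ∃ j, B j ⊆ S ∧ ∀ i ∈ B j, v i = true := by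
  classical
  constructor
  · intro h
    unfold effProb at h
    rw [div_eq_one_iff_eq (by positivity : (0:ℝ) < 2 ^ (n - S.card)).ne'] at h
    have hcard : (univ.filter fun u : Fin n → Bool =>
        (∀ i ∈ S, u i = v i) ∧ DOC B u = true).card
        = (univ.filter fun u : Fin n → Bool => ∀ i ∈ S, u i = v i).card := by
      rw [card_agree v S]
      exact_mod_cast h
    have hsub : (univ.filter fun u : Fin n → Bool => (∀ i ∈ S, u i = v i) ∧ DOC B u = true)
        ⊆ univ.filter fun u : Fin n → Bool => ∀ i ∈ S, u i = v i := by
      intro u hu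
      simp only [mem_filter, mem_univ, true_and] at hu ⊢
      exact hu.1
    have hset := Finset.eq_of_subset_of_card_le hsub (le_of_eq hcard.symm)
    set u0 : Fin n → Bool := fun i => if i ∈ S then v i else false with hu0
    have hmem : u0 ∈ univ.filter fun u : Fin n → Bool => ∀ i ∈ S, u i = v i := by
      simp only [mem_filter, mem_univ, true_and]
      exact fun i hi => if_pos hi
    rw [← hset] at hmem
    have hdoc : DOC B u0 = true := (mem_filter.1 hmem).2.2
    simp only [DOC, decide_eq_true_eq] at hdoc
    obtain ⟨j, hj⟩ := hdoc
    have hiS : ∀ i ∈ B j, i ∈ S := by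
      intro i hi
      by_contra hiS
      have := hj i hi
      simp [u0, hiS] at this
    refine ⟨j, hiS, fun i hi => ?_⟩
    have := hj i hi
    simpa [u0, hiS i hi] using this
  · rintro ⟨j, hjS, hjv⟩
    unfold effProb
    rw [div_eq_one_iff_eq (by positivity : (0:ℝ) < 2 ^ (n - S.card)).ne']
    have hset : (univ.filter fun u : Fin n → Bool => (∀ i ∈ S, u i = v i) ∧ DOC B u = true)
        = univ.filter fun u : Fin n → Bool => ∀ i ∈ S, u i = v i := by
      ext u
      simp only [mem_filter, mem_univ, true_and, and_iff_left_iff_imp]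
      intro hagree
      simp only [DOC, decide_eq_true_eq]
      exact ⟨j, fun i hi => (hagree i (hjS hi)).trans (hjv i hi)⟩
    rw [hset, card_agree v S]
    push_cast
    ring

/-- For a DOC gate with at least one block all-ones in `v` (so `Y = 1`), the actual-cause
candidate set `x*(1)` is exactly `{ v|B_j : B_j is all-ones in v }`: the actual cause of
`{Y = 1}` is a complete satisfied conjunction, indeterminate among the satisfied conjunctions
when more than one is satisfied. -/
theorem doc_actual_cause_of_on_state (n K : ℕ) (hK : 1 ≤ K)
    (B : Fin K → Finset (Fin n)) (hBne : ∀ j, (B j).Nonempty)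
    (hBdisj : ∀ j j', j ≠ j' → Disjoint (B j) (B j'))
    (hBcover : ∀ i : Fin n, ∃ j, i ∈ B j)
    (v : Fin n → Bool) (hv : ∃ j, ∀ i ∈ B j, v i = true) :
    causeCandidates (DOC B) v true =
      {S : Finset (Fin n) | ∃ j, S = B j ∧ ∀ i ∈ B j, v i = true} := by
  classical
  have apos : ∀ S, 0 < effProb (DOC B) v S true := effProb_pos_s7 B v hv
  have aone : ∀ S, effProb (DOC B) v S true ≤ 1 := effProb_le_one_s7 B v
  have hrle : ∀ S T : Finset (Fin n),
      causeRatio (DOC B) v T true ≤ causeRatio (DOC B) v S true ↔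
        effProb (DOC B) v T true ≤ effProb (DOC B) v S true := by
    intro S T
    unfold causeRatio
    rw [Real.logb_le_logb one_lt_two (div_pos (apos T) (apos ∅)) (div_pos (apos S) (apos ∅)),
      div_le_div_iff_of_pos_right (apos ∅)]
  have hreq : ∀ S T : Finset (Fin n),
      causeRatio (DOC B) v T true = causeRatio (DOC B) v S true ↔
        effProb (DOC B) v T true = effProb (DOC B) v S true := by
    intro S T
    constructor
    · intro h
      exact le_antisymm ((hrle S T).1 h.le) ((hrle T S).1 h.ge)
    · intro h
      exact le_antisymm ((hrle S T).2 h.le) ((hrle T S).2 h.ge)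
  obtain ⟨j0, hj0⟩ := hv
  ext S
  simp only [causeCandidates, Set.mem_setOf_eq]
  constructor
  · rintro ⟨hmax, hmin⟩
    have h1 : effProb (DOC B) v (B j0) true = 1 :=
      (effProb_eq_one_iff_s7 B v (B j0)).2 ⟨j0, subset_rfl, hj0⟩
    have hS1 : effProb (DOC B) v S true = 1 := by
      have := (hrle S (B j0)).1 (hmax (B j0))
      rw [h1] at this
      exact le_antisymm (aone S) this
    obtain ⟨j, hjS, hjv⟩ := (effProb_eq_one_iff_s7 B v S).1 hS1
    refine ⟨j, ?_, hjv⟩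
    by_contra hne
    have hss : B j ⊂ S := Finset.ssubset_iff_subset_ne.2 ⟨hjS, fun h => hne h.symm⟩
    exact hmin (B j) hss ((hreq S (B j)).2 (by
      rw [hS1, (effProb_eq_one_iff_s7 B v (B j)).2 ⟨j, subset_rfl, hjv⟩]))
  · rintro ⟨j, rfl, hjv⟩
    have h1 : effProb (DOC B) v (B j) true = 1 :=
      (effProb_eq_one_iff_s7 B v (B j)).2 ⟨j, subset_rfl, hjv⟩
    refine ⟨fun T => (hrle (B j) T).2 (by rw [h1]; exact aone T), ?_⟩
    intro T hT heq
    have hT1 : effProb (DOC B) v T true = 1 := by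
      rw [(hreq (B j) T).1 heq, h1]
    obtain ⟨j', hj'T, hj'v⟩ := (effProb_eq_one_iff_s7 B v T).1 hT1
    rcases eq_or_ne j' j with rfl | hne
    · exact hT.not_subset hj'T
    · have hdisj : Disjoint (B j') (B j') :=
        (hBdisj j' j hne).mono_right (hj'T.trans hT.subset)
      have : B j' = ∅ := disjoint_self.1 hdisj
      exact absurd this (hBne j').ne_empty
end

section
/- Let A, B and W be finite nonempty sets and let f : A × B × W → ℝ be a nonnegative function with Σ f > 0 that does not depend on its second argument, i.e., f(a,b,w) = f(a,b',w) for all a, b, b', w (interpreted as: the variables indexed by B are not parents of the outcome y, so they are unconstrained by y). Define cause probabilities π((a,b)|y) = Σ_w f(a,b,w) / Σ_{a',b',w} f(a',b',w) with π((a,b)) = (|A|·|B|)^{-1}, and π(a|y) = Σ_{b,w} f(a,b,w) / Σ_{a',b',w} f(a',b',w) with π(a) = |A|^{-1}. Then for every (a,b) with Σ_w f(a,b,w) > 0, the cause ratio is unchanged by adding the unconstrained variables: log₂(π((a,b)|y)/π((a,b))) = log₂(π(a|y)/π(a)). -/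
/-! Since `f` does not depend on `b`, marginalizing over `B` multiplies `∑ w, f a b w` by `|B|`,
which is exactly the factor by which the prior `(|A| |B|)⁻¹` is smaller than `|A|⁻¹`. -/

theorem Fintype.sum_eq_card_mul_of_forall_eq {ι R : Type*} [Fintype ι] [NonAssocSemiring R]
    (g : ι → R) (hg : ∀ i j, g i = g j) (i : ι) :
    ∑ j, g j = Fintype.card ι * g i := by
  rw [Finset.sum_eq_card_nsmul fun j _ => hg j i, nsmul_eq_mul, Finset.card_univ]

theorem cause_ratio_unchanged_by_unconstrained_variables_general
    {A B W : Type*} [Fintype A] [Fintype B] [Fintype W]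
    (f : A → B → W → ℝ)
    (hunconstrained : ∀ a b b' w, f a b w = f a b' w)
    (a : A) (b : B) :
    Real.logb 2 (((∑ w : W, f a b w) / ∑ a' : A, ∑ b' : B, ∑ w : W, f a' b' w) /
        (((Fintype.card A : ℝ)) * ((Fintype.card B : ℝ)))⁻¹) =
      Real.logb 2 (((∑ b' : B, ∑ w : W, f a b' w) /
          ∑ a' : A, ∑ b' : B, ∑ w : W, f a' b' w) /
        ((Fintype.card A : ℝ))⁻¹) := by
  have hmarginal : ∑ b' : B, ∑ w : W, f a b' w = Fintype.card B * ∑ w : W, f a b w :=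
    Fintype.sum_eq_card_mul_of_forall_eq _
      (fun b₁ b₂ => Finset.sum_congr rfl fun w _ => hunconstrained a b₁ b₂ w) b
  rw [hmarginal]
  congr 1
  rw [div_inv_eq_mul, div_inv_eq_mul]
  ring

/-- Adding unconstrained variables to a candidate cause does not change the cause ratio.
Inputs are split into candidate-cause states `a ∈ A`, additional variables `b ∈ B` on which the
outcome does not depend (`f a b w = f a b' w`), and marginalized remaining inputs `w ∈ W`, with
`f a b w = p(y | do(a, b, w))`, all weighted uniformly. Then for every `(a, b)` with
`Σ_w f a b w > 0`, `log₂(π((a,b)|y)/π((a,b))) = log₂(π(a|y)/π(a))`, where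
`π((a,b)|y) = Σ_w f a b w / Σ f` with `π((a,b)) = (|A||B|)⁻¹`, and
`π(a|y) = Σ_{b,w} f a b w / Σ f` with `π(a) = |A|⁻¹`. -/
theorem cause_ratio_unchanged_by_unconstrained_variables
    {A B W : Type*} [Fintype A] [Fintype B] [Fintype W]
    [Nonempty A] [Nonempty B] [Nonempty W]
    (f : A → B → W → ℝ) (hf : ∀ a b w, 0 ≤ f a b w)
    (hpos : 0 < ∑ a : A, ∑ b : B, ∑ w : W, f a b w)
    (hunconstrained : ∀ a b b' w, f a b w = f a b' w)
    (a : A) (b : B) (hab : 0 < ∑ w : W, f a b w) :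
    Real.logb 2 (((∑ w : W, f a b w) / ∑ a' : A, ∑ b' : B, ∑ w : W, f a' b' w) /
        (((Fintype.card A : ℝ)) * ((Fintype.card B : ℝ)))⁻¹) =
      Real.logb 2 (((∑ b' : B, ∑ w : W, f a b' w) /
          ∑ a' : A, ∑ b' : B, ∑ w : W, f a' b' w) /
        ((Fintype.card A : ℝ))⁻¹) :=
  cause_ratio_unchanged_by_unconstrained_variables_general f hunconstrained a b
end
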